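/- Let 1 ≤ p < ∞ and let v₀ : ℝ^{M×N} → ℝ be bounded with bound C₀, and set v(s) := v₀(s)(1+|s|^p). If there exists a continuous β : [0,∞) → [0,∞) with β(0)=0 such that |v(s)-v(t)| ≤ β(|s-t|/(1+|s|+|t|))·(1+|s|^p+|t|^p) for all s,t, then there exists a continuous α : [0,∞) → [0,∞) with α(0)=0 such that |v₀(s)-v₀(t)| ≤ α(|s-t|/(1+|s|+|t|)) for all s,t ∈ ℝ^{M×N}. -/

import Mathlib

/-! Let `|t| ≤ |s|`, `A = |s|^p`, `B = |t|^p` and `δ = |s - t| / (1 + |s| + |t|)`. Then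
`(v₀ s - v₀ t)(1 + A) = (v s - v t) - v₀ t (A - B)`, and the mean value bound
`A - B ≤ p |s|^(p-1) (|s| - |t|) ≤ 3 p δ (1 + A)` lets us divide by `1 + A`, giving the modulus
`α(δ) = 2 β(δ) + 3 p C₀ δ`. -/

open MeasureTheory Metric Filter
open scoped ENNReal Topology

noncomputable section

abbrev EN (N : ℕ) : Type := EuclideanSpace ℝ (Fin N)
abbrev Mat (M N : ℕ) : Type := Matrix (Fin M) (Fin N) ℝ

/-- Frobenius norm on real `M × N` matrices. -/
def fnorm {M N : ℕ} (s : Mat M N) : ℝ := Real.sqrt (∑ i, ∑ j, (s i j) ^ 2)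

/-- The matrix of partial derivatives (gradient) of `φ : ℝ^N → ℝ^M` at `x`,
computed via the Fréchet derivative (junk value `0` where `φ` is not differentiable). -/
def grad {M N : ℕ} (φ : EN N → EN M) (x : EN N) : Mat M N :=
  Matrix.of fun i j => fderiv ℝ φ x (EuclideanSpace.single j 1) i

section Frobenius

attribute [local instance] Matrix.frobeniusNormedAddCommGroup

variable {M N : ℕ}

lemma fnorm_eq_norm (s : Mat M N) : fnorm s = ‖s‖ := by
  simp only [fnorm, Matrix.frobenius_norm_def, Real.norm_eq_abs, Real.rpow_two, sq_abs,
    Real.sqrt_eq_rpow]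

lemma fnorm_nonneg (s : Mat M N) : 0 ≤ fnorm s := Real.sqrt_nonneg _

lemma fnorm_sub_le_fnorm_sub (s t : Mat M N) : fnorm s - fnorm t ≤ fnorm (s - t) := by
  simpa only [fnorm_eq_norm] using norm_sub_norm_le s t

lemma fnorm_sub_comm (s t : Mat M N) : fnorm (s - t) = fnorm (t - s) := by
  simpa only [fnorm_eq_norm] using norm_sub_rev s t

end Frobenius

lemma rpow_sub_rpow_le_mul_rpow_sub_one {p : ℝ} (hp : 1 ≤ p) {a b : ℝ} (hb : 0 ≤ b)
    (hba : b ≤ a) : a ^ p - b ^ p ≤ p * a ^ (p - 1) * (a - b) := by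
  rcases (hb.trans hba).eq_or_lt with rfl | ha
  · obtain rfl : b = 0 := le_antisymm hba hb
    simp
  have bernoulli := one_add_mul_self_le_rpow_one_add (by linarith [div_nonneg hb ha.le] :
    (-1 : ℝ) ≤ b / a - 1) hp
  have hpow : a ^ p = a ^ (p - 1) * a := by
    rw [← Real.rpow_add_one ha.ne', sub_add_cancel]
  rw [add_sub_cancel, Real.div_rpow hb ha.le, le_div_iff₀ (by positivity)] at bernoulli
  have : a ^ p * (b / a) = a ^ (p - 1) * b := by
    rw [hpow]; field_simp
  nlinarith

lemma rpow_sub_one_mul_one_add_add_le {p : ℝ} (hp : 1 ≤ p) {a b : ℝ} (ha : 0 ≤ a)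
    (hba : b ≤ a) : a ^ (p - 1) * (1 + a + b) ≤ 3 * (1 + a ^ p) := by
  have hpow : a ^ (p - 1) * a ≤ a ^ p := by
    rcases ha.eq_or_lt with rfl | ha
    · simp [Real.zero_rpow (by linarith : p ≠ 0)]
    · rw [← Real.rpow_add_one ha.ne', sub_add_cancel]
  have hle : a ^ (p - 1) ≤ 1 + a ^ p := by
    rcases le_total a 1 with h | h
    · linarith [Real.rpow_le_one ha h (by linarith : 0 ≤ p - 1), Real.rpow_nonneg ha p]
    · linarith [Real.rpow_le_rpow_of_exponent_le h (by linarith : p - 1 ≤ p)]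
  nlinarith [Real.rpow_nonneg ha (p - 1)]

lemma rpow_sub_rpow_le_mul_div_one_add_add {p : ℝ} (hp : 1 ≤ p) {a b d : ℝ} (hb : 0 ≤ b)
    (hba : b ≤ a) (hd : a - b ≤ d) :
    a ^ p - b ^ p ≤ 3 * p * (d / (1 + a + b)) * (1 + a ^ p) := by
  have ha : 0 ≤ a := hb.trans hba
  have hpos : 0 < 1 + a + b := by linarith
  calc a ^ p - b ^ p ≤ p * a ^ (p - 1) * (a - b) := rpow_sub_rpow_le_mul_rpow_sub_one hp hb hba
    _ ≤ p * a ^ (p - 1) * d := by gcongr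
    _ = p * (d / (1 + a + b)) * (a ^ (p - 1) * (1 + a + b)) := by field_simp
    _ ≤ p * (d / (1 + a + b)) * (3 * (1 + a ^ p)) := by
      have : 0 ≤ d := by linarith
      gcongr p * (d / (1 + a + b)) * ?_
      exact rpow_sub_one_mul_one_add_add_le hp ha hba
    _ = 3 * p * (d / (1 + a + b)) * (1 + a ^ p) := by ring

lemma abs_sub_le_of_abs_mul_one_add_sub_le {x y A B C D e : ℝ} (hB : 0 ≤ B) (hBA : B ≤ A)
    (hy : |y| ≤ C) (hxy : |x * (1 + A) - y * (1 + B)| ≤ e * (1 + A + B))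
    (hAB : A - B ≤ D * (1 + A)) : |x - y| ≤ 2 * e + C * D := by
  have hA : 0 < 1 + A := by linarith
  have he : 0 ≤ e := nonneg_of_mul_nonneg_left ((abs_nonneg _).trans hxy) (by linarith)
  have hsplit : (x - y) * (1 + A) = (x * (1 + A) - y * (1 + B)) - y * (A - B) := by ring
  refine le_of_mul_le_mul_right ?_ hA
  calc |x - y| * (1 + A) = |(x * (1 + A) - y * (1 + B)) - y * (A - B)| := by
        rw [← hsplit, abs_mul, abs_of_pos hA]
    _ ≤ e * (1 + A + B) + C * (A - B) := by
      refine (abs_sub _ _).trans (add_le_add hxy ?_)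
      rw [abs_mul, abs_of_nonneg (sub_nonneg.2 hBA)]
      gcongr
    _ ≤ e * (2 * (1 + A)) + C * (D * (1 + A)) := by
      have : 0 ≤ C := (abs_nonneg y).trans hy
      gcongr
      linarith
    _ = (2 * e + C * D) * (1 + A) := by ring

/-- conversely, if `v(s) = v₀(s)(1+|s|^p)` satisfies the weighted modulus
estimate with modulus `β`, and `v₀` is bounded by `C₀`, then `v₀` is relatively
uniformly continuous with some modulus `α`. -/
theorem stmt2 {M N : ℕ} (p : ℝ) (hp : 1 ≤ p)
    (v₀ : Mat M N → ℝ) (C₀ : ℝ) (hv₀b : ∀ s, |v₀ s| ≤ C₀)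
    (v : Mat M N → ℝ) (hv : ∀ s, v s = v₀ s * (1 + fnorm s ^ p))
    (β : ℝ → ℝ) (hβc : Continuous β) (hβ0 : β 0 = 0) (hβnn : ∀ x, 0 ≤ x → 0 ≤ β x)
    (hβ : ∀ s t : Mat M N,
      |v s - v t| ≤ β (fnorm (s - t) / (1 + fnorm s + fnorm t))
        * (1 + fnorm s ^ p + fnorm t ^ p)) :
    ∃ α : ℝ → ℝ, Continuous α ∧ α 0 = 0 ∧ (∀ x, 0 ≤ x → 0 ≤ α x) ∧
      ∀ s t : Mat M N,
        |v₀ s - v₀ t| ≤ α (fnorm (s - t) / (1 + fnorm s + fnorm t)) := by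
  have hC₀ : 0 ≤ C₀ := (abs_nonneg _).trans (hv₀b 0)
  refine ⟨fun x => 2 * β x + C₀ * (3 * p * x), by fun_prop, by simp [hβ0],
    fun x hx => by have := hβnn x hx; positivity, ?_⟩
  have key : ∀ s t : Mat M N, fnorm t ≤ fnorm s →
      |v₀ s - v₀ t| ≤ 2 * β (fnorm (s - t) / (1 + fnorm s + fnorm t))
        + C₀ * (3 * p * (fnorm (s - t) / (1 + fnorm s + fnorm t))) := by
    intro s t hts
    have hpow : fnorm t ^ p ≤ fnorm s ^ p := Real.rpow_le_rpow (fnorm_nonneg t) hts (by linarith)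
    refine abs_sub_le_of_abs_mul_one_add_sub_le (Real.rpow_nonneg (fnorm_nonneg t) p) hpow
      (hv₀b t) ?_ ?_
    · simpa only [hv] using hβ s t
    · exact rpow_sub_rpow_le_mul_div_one_add_add hp (fnorm_nonneg t) hts
        (fnorm_sub_le_fnorm_sub s t)
  intro s t
  rcases le_total (fnorm t) (fnorm s) with h | h
  · exact key s t h
  · rw [abs_sub_comm, fnorm_sub_comm, add_right_comm 1 (fnorm s)]
    exact key t s h
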